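/- Let L>0, Ω=(0,L)×(-1,1), and κ>0, λ>0. Let w=(w₁,w₂) be a smooth Ω-periodic, divergence-free, symmetric vector field and let ξ be a smooth Ω-periodic scalar function satisfying the Poincaré inequality ‖ξ‖² ≤ λ⁻¹‖∇ξ‖². Then |∫_Ω ξ(x) w₂(x) dx| ≤ (κ/20)‖∇ξ‖² + (5/(κλ))‖∇w₁‖². -/

import Mathlib

open MeasureTheory Real Filter

noncomputable section

/-- First partial derivative. -/
def d1 (f : ℝ × ℝ → ℝ) (p : ℝ × ℝ) : ℝ := fderiv ℝ f p (1, 0)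

/-- Second partial derivative. -/
def d2 (f : ℝ × ℝ → ℝ) (p : ℝ × ℝ) : ℝ := fderiv ℝ f p (0, 1)

/-- Laplacian. -/
def lap (f : ℝ × ℝ → ℝ) (p : ℝ × ℝ) : ℝ := d1 (d1 f) p + d2 (d2 f) p

/-- The domain Ω = (0,L) × (-1,1). -/
def Omg (L : ℝ) : Set (ℝ × ℝ) := Set.Ioo 0 L ×ˢ Set.Ioo (-1) 1

/-- Squared L² norm over Ω. -/
def nrmSq (L : ℝ) (f : ℝ × ℝ → ℝ) : ℝ := ∫ p in Omg L, (f p) ^ 2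

/-- L² norm over Ω. -/
def nrm (L : ℝ) (f : ℝ × ℝ → ℝ) : ℝ := Real.sqrt (nrmSq L f)

/-- Squared L² norm of the gradient over Ω. -/
def gradNrmSq (L : ℝ) (f : ℝ × ℝ → ℝ) : ℝ := ∫ p in Omg L, ((d1 f p) ^ 2 + (d2 f p) ^ 2)

/-- L² norm of the gradient over Ω. -/
def gradNrm (L : ℝ) (f : ℝ × ℝ → ℝ) : ℝ := Real.sqrt (gradNrmSq L f)

/-- Squared L² norm of the Laplacian over Ω. -/
def lapNrmSq (L : ℝ) (f : ℝ × ℝ → ℝ) : ℝ := ∫ p in Omg L, (lap f p) ^ 2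

/-- L² norm of the Laplacian over Ω. -/
def lapNrm (L : ℝ) (f : ℝ × ℝ → ℝ) : ℝ := Real.sqrt (lapNrmSq L f)

/-- Ω-periodic: L-periodic in x₁ and 2-periodic in x₂. -/
def OmgPeriodic (L : ℝ) (f : ℝ × ℝ → ℝ) : Prop :=
  (∀ x y : ℝ, f (x + L, y) = f (x, y)) ∧ (∀ x y : ℝ, f (x, y + 2) = f (x, y))

/-- Divergence-free vector field. -/
def DivFree (u₁ u₂ : ℝ × ℝ → ℝ) : Prop := ∀ p, d1 u₁ p + d2 u₂ p = 0

/-- Symmetric vector field: first component even in x₂, second odd in x₂. -/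
def Symm (u₁ u₂ : ℝ × ℝ → ℝ) : Prop :=
  (∀ x y : ℝ, u₁ (x, -y) = u₁ (x, y)) ∧ (∀ x y : ℝ, u₂ (x, -y) = -u₂ (x, y))


/-!
Oddness of `w₂` in `x₂` gives `w₂(x, 0) = 0`, and `∂₂w₂ = -∂₁w₁`, so
`w₂(x, y) = -∫₀^y ∂₁w₁(x, t) dt` and Cauchy–Schwarz yields `w₂(x, y)² ≤ |y| ∫₋₁¹ ∂₁w₁(x, t)² dt`.
Integrating over `Ω`, where `∫₋₁¹ |y| dy = 1`, gives `‖w₂‖ ≤ ‖∂₁w₁‖ ≤ ‖∇w₁‖`. Young's inequality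
with weight `κλ/10` and the Poincaré inequality for `ξ` then give the estimate.
-/

open Set
open scoped Interval

section Inequalities

variable {α : Type*} [MeasurableSpace α] {μ : Measure α}

lemma abs_mul_le_young (a b : ℝ) {c : ℝ} (hc : 0 < c) :
    |a * b| ≤ c / 2 * a ^ 2 + 1 / (2 * c) * b ^ 2 := by
  rw [abs_mul, ← sq_abs a, ← sq_abs b]
  have := two_mul_le_add_sq (c * |a|) |b|
  field_simp
  nlinarith

lemma abs_integral_mul_le_young {f g : α → ℝ} (hf : Integrable (fun x => f x ^ 2) μ)
    (hg : Integrable (fun x => g x ^ 2) μ) {c : ℝ} (hc : 0 < c) :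
    |∫ x, f x * g x ∂μ| ≤ c / 2 * ∫ x, f x ^ 2 ∂μ + 1 / (2 * c) * ∫ x, g x ^ 2 ∂μ := calc
  |∫ x, f x * g x ∂μ| ≤ ∫ x, |f x * g x| ∂μ := abs_integral_le_integral_abs
  _ ≤ ∫ x, (c / 2 * f x ^ 2 + 1 / (2 * c) * g x ^ 2) ∂μ :=
    integral_mono_of_nonneg (.of_forall fun _ => abs_nonneg _)
      ((hf.const_mul _).add (hg.const_mul _)) (.of_forall fun x => abs_mul_le_young _ _ hc)
  _ = c / 2 * ∫ x, f x ^ 2 ∂μ + 1 / (2 * c) * ∫ x, g x ^ 2 ∂μ := by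
    rw [integral_add (hf.const_mul _) (hg.const_mul _), integral_const_mul, integral_const_mul]

lemma sq_integral_le_measureReal_mul_integral_sq [IsFiniteMeasure μ] {f : α → ℝ}
    (hf : Integrable (fun x => f x ^ 2) μ) :
    (∫ x, f x ∂μ) ^ 2 ≤ μ.real univ * ∫ x, f x ^ 2 ∂μ := by
  rcases eq_zero_or_neZero μ with rfl | _
  · simp
  set A := ∫ x, f x ∂μ
  set d := μ.real univ
  have hd : 0 < d := measureReal_univ_pos
  -- Young's inequality for `f` against the constant `A`, with weight `d = μ univ`.
  have h := abs_integral_mul_le_young hf (g := fun _ => A) (integrable_const (μ := μ) (A ^ 2)) hd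
  rw [integral_mul_const, integral_const, smul_eq_mul] at h
  have h' : 1 / (2 * d) * (d * A ^ 2) = A ^ 2 / 2 := by field_simp
  nlinarith [le_abs_self (A * A)]

end Inequalities

lemma sq_sub_le_abs_mul_integral_deriv_sq {f f' : ℝ → ℝ} (hf : ∀ t, HasDerivAt f (f' t) t)
    (hf' : Continuous f') (a b : ℝ) :
    (f b - f a) ^ 2 ≤ |b - a| * ∫ t in Ι a b, f' t ^ 2 := by
  have : IsFiniteMeasure (volume.restrict (Ι a b)) :=
    isFiniteMeasure_restrict.2 (by simp)
  have hsq : IntegrableOn (fun t => f' t ^ 2) (Ι a b) :=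
    ((hf'.pow 2).integrableOn_uIcc (a := a) (b := b)).mono_set uIoc_subset_uIcc
  calc (f b - f a) ^ 2 = (∫ t in Ι a b, f' t) ^ 2 := by
        rw [← intervalIntegral.integral_eq_sub_of_hasDerivAt (fun t _ => hf t)
          (hf'.intervalIntegrable a b), ← sq_abs,
          intervalIntegral.abs_integral_eq_abs_integral_uIoc, sq_abs]
    _ ≤ |b - a| * ∫ t in Ι a b, f' t ^ 2 := by
      simpa [Measure.real, Real.volume_uIoc] using sq_integral_le_measureReal_mul_integral_sq hsq

lemma integral_abs_Ioo_neg_one_one : ∫ y in Ioo (-1 : ℝ) 1, |y| = 1 := by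
  rw [← integral_Ioc_eq_integral_Ioo, ← intervalIntegral.integral_of_le (by norm_num),
    ← intervalIntegral.integral_add_adjacent_intervals (b := 0)
      (continuous_abs.intervalIntegrable _ _) (continuous_abs.intervalIntegrable _ _),
    intervalIntegral.integral_congr (g := fun y => -y) fun y hy =>
      abs_of_nonpos (by simp_all [uIcc_of_le]),
    intervalIntegral.integral_congr (g := fun y => y) fun y hy =>
      abs_of_nonneg (by simp_all [uIcc_of_le]),
    intervalIntegral.integral_neg, integral_id, integral_id]
  norm_num

section PartialDerivatives

variable {f : ℝ × ℝ → ℝ}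

lemma continuous_d1 (hf : ContDiff ℝ 1 f) : Continuous (d1 f) :=
  (hf.continuous_fderiv one_ne_zero).clm_apply continuous_const

lemma continuous_d2 (hf : ContDiff ℝ 1 f) : Continuous (d2 f) :=
  (hf.continuous_fderiv one_ne_zero).clm_apply continuous_const

lemma hasDerivAt_d2 (hf : Differentiable ℝ f) (x t : ℝ) :
    HasDerivAt (fun s => f (x, s)) (d2 f (x, t)) t := by
  have hline : HasDerivAt (fun s : ℝ => (x, s)) ((0, 1) : ℝ × ℝ) t :=
    (hasDerivAt_const t x).prodMk (hasDerivAt_id t)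
  exact (hf (x, t)).hasFDerivAt.comp_hasDerivAt t hline

end PartialDerivatives

lemma Continuous.integrableOn_Omg {L : ℝ} {g : ℝ × ℝ → ℝ} (hg : Continuous g) :
    IntegrableOn g (Omg L) :=
  (hg.continuousOn.integrableOn_compact (isCompact_Icc.prod isCompact_Icc)).mono_set
    (prod_mono Ioo_subset_Icc_self Ioo_subset_Icc_self)

lemma sq_le_abs_mul_integral_sq_d1 {w₁ w₂ : ℝ × ℝ → ℝ} (hw₁ : ContDiff ℝ 1 w₁)
    (hw₂ : ContDiff ℝ 1 w₂) (hdiv : DivFree w₁ w₂) (hodd : ∀ x y : ℝ, w₂ (x, -y) = -w₂ (x, y))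
    (x : ℝ) {y : ℝ} (hy : y ∈ Ioo (-1 : ℝ) 1) :
    w₂ (x, y) ^ 2 ≤ |y| * ∫ t in Ioo (-1 : ℝ) 1, d1 w₁ (x, t) ^ 2 := by
  have hzero : w₂ (x, 0) = 0 := by have h := hodd x 0; rw [neg_zero] at h; linarith
  have hderiv : ∀ t, HasDerivAt (fun s => w₂ (x, s)) (-d1 w₁ (x, t)) t := fun t => by
    convert hasDerivAt_d2 (hw₂.differentiable one_ne_zero) x t using 1
    linarith [hdiv (x, t)]
  have hcont : Continuous fun t => d1 w₁ (x, t) :=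
    (continuous_d1 hw₁).comp (continuous_const.prodMk continuous_id)
  have hsub : Ι 0 y ⊆ Ioo (-1 : ℝ) 1 := fun t ht => by
    rw [mem_uIoc] at ht
    constructor <;> rcases ht with h | h <;> linarith [hy.1, hy.2, h.1, h.2]
  have hftc := sq_sub_le_abs_mul_integral_deriv_sq hderiv hcont.neg 0 y
  simp only [hzero, sub_zero, neg_sq] at hftc
  refine hftc.trans (mul_le_mul_of_nonneg_left ?_ (abs_nonneg y))
  exact setIntegral_mono_set ((hcont.pow 2).integrableOn_Icc.mono_set Ioo_subset_Icc_self)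
    (.of_forall fun t => by positivity) hsub.eventuallyLE

lemma integrableOn_integral_Ioo_of_continuous {L : ℝ} {g : ℝ × ℝ → ℝ} (hg : Continuous g) :
    IntegrableOn (fun x => ∫ y in Ioo (-1 : ℝ) 1, g (x, y)) (Ioo 0 L) := by
  have h : Integrable g ((volume.restrict (Ioo 0 L)).prod (volume.restrict (Ioo (-1 : ℝ) 1))) := by
    rw [Measure.prod_restrict]
    exact hg.integrableOn_Omg
  exact h.integral_prod_left

lemma integral_sq_le_integral_sq_d1 {L : ℝ} {w₁ w₂ : ℝ × ℝ → ℝ} (hw₁ : ContDiff ℝ 1 w₁)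
    (hw₂ : ContDiff ℝ 1 w₂) (hdiv : DivFree w₁ w₂) (hodd : ∀ x y : ℝ, w₂ (x, -y) = -w₂ (x, y)) :
    ∫ p in Omg L, w₂ p ^ 2 ≤ ∫ p in Omg L, d1 w₁ p ^ 2 := by
  have hw₂sq : Continuous fun p => w₂ p ^ 2 := hw₂.continuous.pow 2
  have hd1sq : Continuous fun p => d1 w₁ p ^ 2 := (continuous_d1 hw₁).pow 2
  rw [Omg, Measure.volume_eq_prod, setIntegral_prod _ hw₂sq.integrableOn_Omg,
    setIntegral_prod _ hd1sq.integrableOn_Omg]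
  refine setIntegral_mono_on (integrableOn_integral_Ioo_of_continuous hw₂sq)
    (integrableOn_integral_Ioo_of_continuous hd1sq) measurableSet_Ioo fun x _ => ?_
  calc ∫ y in Ioo (-1 : ℝ) 1, w₂ (x, y) ^ 2
      ≤ ∫ y in Ioo (-1 : ℝ) 1, |y| * ∫ t in Ioo (-1 : ℝ) 1, d1 w₁ (x, t) ^ 2 :=
        setIntegral_mono_on
          ((hw₂sq.comp (continuous_const.prodMk continuous_id)).integrableOn_Icc.mono_set
            Ioo_subset_Icc_self)
          ((continuous_abs.mul continuous_const).integrableOn_Icc.mono_set Ioo_subset_Icc_self)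
          measurableSet_Ioo fun y hy => sq_le_abs_mul_integral_sq_d1 hw₁ hw₂ hdiv hodd x hy
    _ = ∫ t in Ioo (-1 : ℝ) 1, d1 w₁ (x, t) ^ 2 := by
        rw [integral_mul_const, integral_abs_Ioo_neg_one_one, one_mul]

lemma integral_sq_d1_le_gradNrmSq {L : ℝ} {f : ℝ × ℝ → ℝ} (hf : ContDiff ℝ 1 f) :
    ∫ p in Omg L, d1 f p ^ 2 ≤ gradNrmSq L f :=
  setIntegral_mono ((continuous_d1 hf).pow 2).integrableOn_Omg
    (((continuous_d1 hf).pow 2).add ((continuous_d2 hf).pow 2)).integrableOn_Omg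
    fun _ => le_add_of_nonneg_right (sq_nonneg _)

theorem buoyancy_estimate_general (L : ℝ) (κ lam : ℝ) (hκ : 0 < κ) (hlam : 0 < lam)
    (w₁ w₂ ξ : ℝ × ℝ → ℝ)
    (hw₁ : ContDiff ℝ (⊤ : ℕ∞) w₁) (hw₂ : ContDiff ℝ (⊤ : ℕ∞) w₂) (hξ : ContDiff ℝ (⊤ : ℕ∞) ξ)
    (hdiv : DivFree w₁ w₂) (hsym : Symm w₁ w₂)
    (hpoincare : nrmSq L ξ ≤ lam⁻¹ * gradNrmSq L ξ) :
    |∫ p in Omg L, ξ p * w₂ p| ≤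
      κ / 20 * gradNrmSq L ξ + 5 / (κ * lam) * gradNrmSq L w₁ := by
  have hw₁' : ContDiff ℝ 1 w₁ := hw₁.of_le (by simp)
  have hw₂' : ContDiff ℝ 1 w₂ := hw₂.of_le (by simp)
  have hw₂L2 : ∫ p in Omg L, w₂ p ^ 2 ≤ gradNrmSq L w₁ :=
    (integral_sq_le_integral_sq_d1 hw₁' hw₂' hdiv hsym.2).trans (integral_sq_d1_le_gradNrmSq hw₁')
  have hc : 0 < κ * lam / 10 := by positivity
  calc |∫ p in Omg L, ξ p * w₂ p|
      ≤ κ * lam / 10 / 2 * nrmSq L ξ + 1 / (2 * (κ * lam / 10)) * ∫ p in Omg L, w₂ p ^ 2 :=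
        abs_integral_mul_le_young (hξ.continuous.pow 2).integrableOn_Omg
          (hw₂.continuous.pow 2).integrableOn_Omg hc
    _ ≤ κ * lam / 10 / 2 * (lam⁻¹ * gradNrmSq L ξ) + 1 / (2 * (κ * lam / 10)) * gradNrmSq L w₁ := by
        gcongr
    _ = κ / 20 * gradNrmSq L ξ + 5 / (κ * lam) * gradNrmSq L w₁ := by
        field_simp
        ring

/-- estimate (3.8) of the paper:
`|∫_Ω ξ w₂| ≤ (κ/20)‖∇ξ‖² + (5/(κλ))‖∇w₁‖²`. -/
theorem buoyancy_estimate (L : ℝ) (hL : 0 < L) (κ lam : ℝ) (hκ : 0 < κ) (hlam : 0 < lam)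
    (w₁ w₂ ξ : ℝ × ℝ → ℝ)
    (hw₁ : ContDiff ℝ (⊤ : ℕ∞) w₁) (hw₂ : ContDiff ℝ (⊤ : ℕ∞) w₂) (hξ : ContDiff ℝ (⊤ : ℕ∞) ξ)
    (hpw₁ : OmgPeriodic L w₁) (hpw₂ : OmgPeriodic L w₂) (hpξ : OmgPeriodic L ξ)
    (hdiv : DivFree w₁ w₂) (hsym : Symm w₁ w₂)
    (hpoincare : nrmSq L ξ ≤ lam⁻¹ * gradNrmSq L ξ) :
    |∫ p in Omg L, ξ p * w₂ p| ≤
      κ / 20 * gradNrmSq L ξ + 5 / (κ * lam) * gradNrmSq L w₁ :=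
  buoyancy_estimate_general L κ lam hκ hlam w₁ w₂ ξ hw₁ hw₂ hξ hdiv hsym hpoincare
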